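/- arXiv:0706.4247 — 7 statements merged into one kernel-verified Lean document; each statement's English description precedes it below -/
import Mathlib

section
/- If H₁ is a virtual retract of G₁ and H₂ is a virtual retract of G₂, then H₁ × H₂ is a virtual retract of G₁ × G₂. -/
def IsVirtualRetract {G : Type*} [Group G] (H : Subgroup G) : Prop :=
  ∃ V : Subgroup G, V.FiniteIndex ∧ H ≤ V ∧
    ∃ ρ : V →* G, (∀ v : V, ρ v ∈ H) ∧ (∀ v : V, (v : G) ∈ H → ρ v = v)

theorem Subgroup.FiniteIndex.prod {G₁ G₂ : Type*} [Group G₁] [Group G₂]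
    {V₁ : Subgroup G₁} {V₂ : Subgroup G₂} (h₁ : V₁.FiniteIndex) (h₂ : V₂.FiniteIndex) :
    (V₁.prod V₂).FiniteIndex :=
  ⟨by rw [Subgroup.index_prod]; exact mul_ne_zero h₁.index_ne_zero h₂.index_ne_zero⟩

theorem IsVirtualRetract.prod {G₁ G₂ : Type*} [Group G₁] [Group G₂]
    {H₁ : Subgroup G₁} {H₂ : Subgroup G₂}
    (h₁ : IsVirtualRetract H₁) (h₂ : IsVirtualRetract H₂) :
    IsVirtualRetract (H₁.prod H₂) := by
  obtain ⟨V₁, hV₁, hHV₁, ρ₁, hρ₁H, hρ₁id⟩ := h₁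
  obtain ⟨V₂, hV₂, hHV₂, ρ₂, hρ₂H, hρ₂id⟩ := h₂
  refine ⟨V₁.prod V₂, hV₁.prod hV₂, Subgroup.prod_mono hHV₁ hHV₂,
    (ρ₁.prodMap ρ₂).comp (V₁.prodEquiv V₂).toMonoidHom,
    fun v => ⟨hρ₁H _, hρ₂H _⟩, fun v hv => Prod.ext (hρ₁id _ hv.1) (hρ₂id _ hv.2)⟩

theorem stmt4 {G₁ G₂ : Type*} [Group G₁] [Group G₂] (H₁ : Subgroup G₁) (H₂ : Subgroup G₂)
    (h₁ : IsVirtualRetract H₁) (h₂ : IsVirtualRetract H₂) :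
    IsVirtualRetract (H₁.prod H₂) :=
  h₁.prod h₂
end

section
/- Let G be a group, K a virtual retract of G, and H a subgroup of K. If H is a virtual retract of K then H is a virtual retract of G. -/
/-! If `ρ : V → K` retracts a finite-index `V ≤ G` onto `K` and `σ : W → H` retracts a
finite-index `W ≤ K` onto `H`, then `σ ∘ ρ` retracts `ρ⁻¹(W)`, which has finite index in `V`
and hence in `G`, onto `H`. -/

namespace Subgroup

variable {G N : Type*} [Group G] [Group N]

instance finiteIndex_comap (f : G →* N) (H : Subgroup N) [H.FiniteIndex] :
    (H.comap f).FiniteIndex :=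
  ⟨by rw [index_comap]; exact FiniteIndex.index_ne_zero⟩

instance finiteIndex_map_subtype (V : Subgroup G) [V.FiniteIndex] (W : Subgroup V)
    [W.FiniteIndex] : (W.map V.subtype).FiniteIndex :=
  ⟨by
    rw [index_map_subtype]
    exact mul_ne_zero FiniteIndex.index_ne_zero FiniteIndex.index_ne_zero⟩

end Subgroup

namespace IsVirtualRetract

variable {G : Type*} [Group G]

theorem map_subtype {V : Subgroup G} [V.FiniteIndex] {M : Subgroup V}
    (hM : IsVirtualRetract M) : IsVirtualRetract (M.map V.subtype) := by
  obtain ⟨W, hW, hMW, σ, hσM, hσid⟩ := hM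
  let e : W ≃* W.map V.subtype := W.equivMapOfInjective V.subtype V.subtype_injective
  have he : ∀ u, ((e.symm u : V) : G) = u := fun u =>
    congrArg Subtype.val (e.apply_symm_apply u)
  refine ⟨W.map V.subtype, inferInstance, Subgroup.map_mono hMW,
    V.subtype.comp (σ.comp e.symm.toMonoidHom), fun u => ⟨_, hσM _, rfl⟩, ?_⟩
  rintro u ⟨m, hm, hmu⟩
  have hm' : ((e.symm u : W) : V) = m := Subtype.ext ((he u).trans hmu.symm)
  change ((σ (e.symm u) : V) : G) = u
  rw [hσid _ (hm' ▸ hm), he]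

theorem map_of_leftInverse {K V : Type*} [Group K] [Group V] {ι : K →* V} {ρ : V →* K}
    (hρι : Function.LeftInverse ρ ι) {H : Subgroup K} (hH : IsVirtualRetract H) :
    IsVirtualRetract (H.map ι) := by
  obtain ⟨W, hW, hHW, σ, hσH, hσid⟩ := hH
  refine ⟨W.comap ρ, inferInstance, ?_, ι.comp (σ.comp (ρ.subgroupComap W)),
    fun u => ⟨_, hσH _, rfl⟩, ?_⟩
  · rintro _ ⟨h, hh, rfl⟩
    change ρ (ι h) ∈ W
    exact (hρι h).symm ▸ hHW hh
  · rintro u ⟨h, hh, hu⟩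
    have hρu : ρ.subgroupComap W u = ⟨h, hHW hh⟩ := Subtype.ext (by
      change ρ u = h; rw [← hu, hρι h])
    change ι (σ (ρ.subgroupComap W u)) = u
    rw [hρu, hσid _ hh, hu]

end IsVirtualRetract

theorem stmt5 {G : Type*} [Group G] (K H : Subgroup G) (hHK : H ≤ K)
    (hK : IsVirtualRetract K) (hH : IsVirtualRetract (H.subgroupOf K)) :
    IsVirtualRetract H := by
  obtain ⟨V, hV, hKV, ρ, hρK, hρid⟩ := hK
  have hρι : Function.LeftInverse (ρ.codRestrict K hρK) (Subgroup.inclusion hKV) :=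
    fun k => Subtype.ext (hρid _ k.2)
  have hHV := (hH.map_of_leftInverse hρι).map_subtype
  rwa [Subgroup.map_map, Subgroup.subtype_comp_inclusion, Subgroup.subgroupOf_map_subtype,
    inf_eq_left.mpr hHK] at hHV
end

section
/- Let G be a group and K a virtual retract of G. If a subgroup H of K is separable in K, and K itself is separable in G, then H is separable in G. -/
def SubgroupSeparable {G : Type*} [Group G] (H : Subgroup G) : Prop :=
  ∀ g : G, g ∉ H → ∃ K : Subgroup G, K.FiniteIndex ∧ H ≤ K ∧ g ∉ K

/-!
A retraction `ρ : V → K` from a finite-index subgroup `V` onto `K` lets every finite-index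
subgroup `M` of `K` be extended to the finite-index subgroup `ρ⁻¹(M)` of `G`, which meets `K`
exactly in `M`. So the profinite topology of `G` induces that of `K`: an element of `K` outside
`H` is separated from `H` by the extension of a subgroup of `K`, and an element outside `K` is
already separated from `K ⊇ H`.
-/

open Subgroup

section

variable {G : Type*} [Group G] {H K : Subgroup G}

theorem IsVirtualRetract.exists_finiteIndex_subgroupOf_eq (hK : IsVirtualRetract K)
    (M : Subgroup K) [M.FiniteIndex] :
    ∃ W : Subgroup G, W.FiniteIndex ∧ W.subgroupOf K = M := by
  obtain ⟨V, hVfi, hKV, ρ, hρK, hρid⟩ := hK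
  let ρK : V →* K := ρ.codRestrict K hρK
  have hρK_fix : ∀ k : K, ρK ⟨k, hKV k.2⟩ = k := fun k => Subtype.ext (hρid _ k.2)
  have hρK_surj : Function.Surjective ρK := fun k => ⟨_, hρK_fix k⟩
  refine ⟨(M.comap ρK).map V.subtype, ⟨?_⟩, ?_⟩
  · rw [index_map_subtype, index_comap_of_surjective M hρK_surj]
    exact mul_ne_zero FiniteIndex.index_ne_zero hVfi.index_ne_zero
  · ext k
    have hk : (k : G) = V.subtype ⟨k, hKV k.2⟩ := rfl
    rw [mem_subgroupOf, hk, mem_map_iff_mem V.subtype_injective, mem_comap, hρK_fix]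

theorem SubgroupSeparable.of_subgroupOf (hHK : H ≤ K)
    (hext : ∀ M : Subgroup K, M.FiniteIndex →
      ∃ W : Subgroup G, W.FiniteIndex ∧ W.subgroupOf K = M)
    (hKsep : SubgroupSeparable K) (hH : SubgroupSeparable (H.subgroupOf K)) :
    SubgroupSeparable H := by
  intro g hg
  by_cases hgK : g ∈ K
  · obtain ⟨M, hM, hHM, hgM⟩ := hH ⟨g, hgK⟩ (by rwa [mem_subgroupOf])
    obtain ⟨W, hW, rfl⟩ := hext M hM
    refine ⟨W, hW, fun h hh => ?_, fun hgW => hgM (by rwa [mem_subgroupOf])⟩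
    exact mem_subgroupOf.mp (hHM (show ⟨h, hHK hh⟩ ∈ H.subgroupOf K from hh))
  · obtain ⟨L, hL, hKL, hgL⟩ := hKsep g hgK
    exact ⟨L, hL, hHK.trans hKL, hgL⟩

end

theorem stmt6 {G : Type*} [Group G] (K H : Subgroup G) (hHK : H ≤ K)
    (hK : IsVirtualRetract K) (hKsep : SubgroupSeparable K)
    (hH : SubgroupSeparable (H.subgroupOf K)) :
    SubgroupSeparable H := by
  exact SubgroupSeparable.of_subgroupOf hHK
    (fun M _ => hK.exists_finiteIndex_subgroupOf_eq M) hKsep hH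
end

section
/- Every virtual retract of a residually finite group is a separable subgroup. -/
def ResiduallyFinite (G : Type*) [Group G] : Prop :=
  ∀ g : G, g ≠ 1 → ∃ (Q : Type) (_ : Group Q) (_ : Finite Q) (φ : G →* Q), φ g ≠ 1

/-!
On a finite-index subgroup `V ⊇ H` the retraction `ρ : V → H` exhibits `H` as the equalizer of
`ρ` and the inclusion `V → G`. If `v ∈ V` lies outside `H`, then `ρ v ≠ v`, and a finite quotient
`φ` of `G` separating `ρ v` from `v` makes the equalizer of `φ ∘ ρ` and `φ ∘ incl` a finite-index
subgroup of `V`, hence of `G`, that contains `H` but not `v`.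
-/

theorem ResiduallyFinite.exists_map_ne {G : Type*} [Group G] (hG : ResiduallyFinite G)
    {x y : G} (hxy : x ≠ y) :
    ∃ (Q : Type) (_ : Group Q) (_ : Finite Q) (φ : G →* Q), φ x ≠ φ y := by
  obtain ⟨Q, _, _, φ, hφ⟩ := hG (x⁻¹ * y) fun h ↦ hxy (eq_of_inv_mul_eq_one h)
  refine ⟨Q, inferInstance, inferInstance, φ, fun h ↦ hφ ?_⟩
  rw [map_mul, map_inv, h, inv_mul_cancel]

theorem MonoidHom.finiteIndex_eqLocus {V Q : Type*} [Group V] [Group Q] [Finite Q]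
    (f g : V →* Q) : (f.eqLocus g).FiniteIndex :=
  Subgroup.finiteIndex_of_le (H := (f.prod g).ker) fun v hv ↦ by
    have hv : (f v, g v) = (1, 1) := hv
    exact (congrArg Prod.fst hv).trans (congrArg Prod.snd hv).symm

theorem subgroupSeparable_eqLocus {V G : Type*} [Group V] [Group G] (hG : ResiduallyFinite G)
    (f g : V →* G) : SubgroupSeparable (f.eqLocus g) := by
  intro v hv
  obtain ⟨Q, _, _, φ, hφ⟩ := hG.exists_map_ne hv
  refine ⟨(φ.comp f).eqLocus (φ.comp g), MonoidHom.finiteIndex_eqLocus _ _, ?_, hφ⟩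
  intro w (hw : f w = g w)
  change φ (f w) = φ (g w)
  rw [hw]

theorem SubgroupSeparable.of_subgroupOf_s7 {G : Type*} [Group G] {H V : Subgroup G}
    [hV : V.FiniteIndex] (hHV : H ≤ V) (hsep : SubgroupSeparable (H.subgroupOf V)) :
    SubgroupSeparable H := by
  intro g hg
  by_cases hgV : g ∈ V
  · obtain ⟨K, hK, hHK, hgK⟩ := hsep ⟨g, hgV⟩ hg
    refine ⟨K.map V.subtype, ?_, fun h hh ↦ ⟨⟨h, hHV hh⟩, hHK hh, rfl⟩, ?_⟩
    · rw [Subgroup.finiteIndex_iff, Subgroup.index_map_subtype]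
      exact mul_ne_zero hK.index_ne_zero hV.index_ne_zero
    · rintro ⟨k, hk, hkg⟩
      exact hgK (by rwa [show k = ⟨g, hgV⟩ from Subtype.ext hkg] at hk)
  · exact ⟨V, hV, hHV, hgV⟩

theorem subgroupOf_eq_eqLocus_of_retraction {G : Type*} [Group G] {H V : Subgroup G}
    (ρ : V →* G) (hρH : ∀ v : V, ρ v ∈ H) (hρ : ∀ v : V, (v : G) ∈ H → ρ v = v) :
    H.subgroupOf V = ρ.eqLocus V.subtype := by
  ext v
  refine ⟨hρ v, fun h ↦ ?_⟩
  have h : ρ v = v := h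
  rw [Subgroup.mem_subgroupOf, ← h]
  exact hρH v

theorem stmt7 {G : Type*} [Group G] (hG : ResiduallyFinite G) (H : Subgroup G)
    (hH : IsVirtualRetract H) : SubgroupSeparable H := by
  obtain ⟨V, hV, hHV, ρ, hρH, hρ⟩ := hH
  refine SubgroupSeparable.of_subgroupOf_s7 hHV ?_
  rw [subgroupOf_eq_eqLocus_of_retraction ρ hρH hρ]
  exact subgroupSeparable_eqLocus hG ρ V.subtype
end

section
/- Let G₁, ..., Gₙ be groups in which every finitely generated subgroup is both separable and a virtual retract, let G = G₁ × ⋯ × Gₙ, let H ≤ G be finitely generated, and let Ĥ = π₁(H) × ⋯ × πₙ(H). Then H is separable in G if and only if H is separable in Ĥ. -/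
/-!
Write `Ĥ = π₁(H) × ⋯ × πₙ(H)`. A subgroup separable in `G` is separable in every subgroup
containing it, which gives one direction. Conversely, each `πᵢ(H)` is finitely generated, hence separable and a virtual
retract of `Gᵢ`, and both properties pass to the product `Ĥ ≤ G`. An element `g ∉ H` is then
separated from `H` by separability of `Ĥ` if `g ∉ Ĥ`, and otherwise by pulling back, along a
virtual retraction `V → Ĥ`, a finite-index subgroup of `Ĥ` that separates `g` from `H`.
-/

open Subgroup

theorem Subgroup.FG.map {G G' : Type*} [Group G] [Group G'] {H : Subgroup G} (hH : H.FG)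
    (f : G →* G') : (H.map f).FG := by
  classical
  obtain ⟨s, rfl⟩ := hH
  exact ⟨s.image f, by rw [MonoidHom.map_closure, Finset.coe_image]⟩

instance Subgroup.finiteIndex_comap_s11 {G G' : Type*} [Group G] [Group G'] (K : Subgroup G)
    [K.FiniteIndex] (f : G' →* G) : (K.comap f).FiniteIndex :=
  ⟨by rw [index_comap]; exact FiniteIndex.index_ne_zero⟩

theorem Subgroup.finiteIndex_map_subtype_s11 {G : Type*} [Group G] {V : Subgroup G} [V.FiniteIndex]
    (K : Subgroup V) [K.FiniteIndex] : (K.map V.subtype).FiniteIndex :=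
  ⟨by
    rw [index_map_subtype]
    exact mul_ne_zero FiniteIndex.index_ne_zero FiniteIndex.index_ne_zero⟩

theorem Subgroup.finiteIndex_pi {ι : Type*} [Finite ι] {G : ι → Type*} [∀ i, Group (G i)]
    (K : ∀ i, Subgroup (G i)) [∀ i, (K i).FiniteIndex] : (pi Set.univ K).FiniteIndex := by
  have hpi : pi Set.univ K = ⨅ i, (K i).comap (Pi.evalMonoidHom G i) := by
    ext x; simp [mem_pi, mem_iInf]
  rw [hpi]
  exact finiteIndex_iInf fun _ => inferInstance

namespace SubgroupSeparable

variable {G : Type*} [Group G] {H M : Subgroup G}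

theorem subgroupOf (hH : SubgroupSeparable H) (M : Subgroup G) :
    SubgroupSeparable (H.subgroupOf M) := by
  intro g hg
  obtain ⟨K, hK, hHK, hgK⟩ := hH g hg
  exact ⟨K.subgroupOf M, inferInstance, fun x hx => hHK hx, hgK⟩

theorem pi {ι : Type*} {G : ι → Type*} [∀ i, Group (G i)] {K : ∀ i, Subgroup (G i)}
    (hK : ∀ i, SubgroupSeparable (K i)) : SubgroupSeparable (Subgroup.pi Set.univ K) := by
  intro g hg
  obtain ⟨i, -, hgi⟩ : ∃ i ∈ Set.univ, g i ∉ K i := by simpa [mem_pi] using hg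
  obtain ⟨L, hL, hKL, hgL⟩ := hK i (g i) hgi
  exact ⟨L.comap (Pi.evalMonoidHom G i), inferInstance,
    fun x hx => hKL (hx i trivial), hgL⟩

theorem of_subgroupOf_s11 (hHM : H ≤ M) (hM : SubgroupSeparable M) (hMV : IsVirtualRetract M)
    (hH : SubgroupSeparable (H.subgroupOf M)) : SubgroupSeparable H := by
  intro g hg
  by_cases hgM : g ∈ M
  swap
  · obtain ⟨K, hK, hMK, hgK⟩ := hM g hgM
    exact ⟨K, hK, hHM.trans hMK, hgK⟩
  obtain ⟨L, hL, hHL, hgL⟩ := hH ⟨g, hgM⟩ hg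
  obtain ⟨V, hV, hMV, ρ, hρM, hρ⟩ := hMV
  let ρM : V →* M := ρ.codRestrict M hρM
  have hρM_eq (v : V) (hv : (v : G) ∈ M) : ρM v = ⟨v, hv⟩ := Subtype.ext (hρ v hv)
  refine ⟨(L.comap ρM).map V.subtype, finiteIndex_map_subtype_s11 _, fun h hh => ?_, ?_⟩
  · refine ⟨⟨h, hMV (hHM hh)⟩, ?_, rfl⟩
    rw [SetLike.mem_coe, mem_comap, hρM_eq _ (hHM hh)]
    exact hHL hh
  · rintro ⟨v, hv, rfl⟩
    rw [SetLike.mem_coe, mem_comap, hρM_eq v hgM] at hv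
    exact hgL hv

end SubgroupSeparable

theorem IsVirtualRetract.pi {ι : Type*} [Finite ι] {G : ι → Type*} [∀ i, Group (G i)]
    {K : ∀ i, Subgroup (G i)} (hK : ∀ i, IsVirtualRetract (K i)) :
    IsVirtualRetract (Subgroup.pi Set.univ K) := by
  choose V hV hKV ρ hρK hρ using hK
  let evalV (i : ι) : Subgroup.pi Set.univ V →* V i :=
    ((Pi.evalMonoidHom G i).comp (Subgroup.pi Set.univ V).subtype).codRestrict (V i)
      fun v => v.2 i trivial
  refine ⟨Subgroup.pi Set.univ V, finiteIndex_pi V, fun x hx i _ => hKV i (hx i trivial),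
    MonoidHom.pi fun i => (ρ i).comp (evalV i), fun v i _ => hρK i _, fun v hv => ?_⟩
  funext i
  exact hρ i _ (hv i trivial)

theorem stmt11 {n : ℕ} (G : Fin n → Type*) [∀ i, Group (G i)]
    (hsep : ∀ i, ∀ K : Subgroup (G i), K.FG → SubgroupSeparable K)
    (hvr : ∀ i, ∀ K : Subgroup (G i), K.FG → IsVirtualRetract K)
    (H : Subgroup (∀ i, G i)) (hH : H.FG) :
    SubgroupSeparable H ↔
      SubgroupSeparable
        (H.subgroupOf (Subgroup.pi Set.univ (fun i => H.map (Pi.evalMonoidHom G i)))) := by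
  have hfg (i : Fin n) : (H.map (Pi.evalMonoidHom G i)).FG := hH.map _
  have hle : H ≤ Subgroup.pi Set.univ (fun i => H.map (Pi.evalMonoidHom G i)) :=
    fun h hh i _ => ⟨h, hh, rfl⟩
  exact ⟨fun hsepH => hsepH.subgroupOf _, SubgroupSeparable.of_subgroupOf_s11 hle
    (.pi fun i => hsep i _ (hfg i)) (.pi fun i => hvr i _ (hfg i))⟩
end

section
/- Let G = A × B be a direct product of groups with A residually finite, and let H ≤ G be a subgroup on which the projection q : G → B is injective, with inverse ι : q(H) → H. Then for every g ∈ A × q(H) with g ∉ H, there exists a finite-index subgroup V of A × q(H) containing H but not g. -/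
theorem MonoidHom.exists_finiteIndex_eqLocus_le_notMem {L A : Type*} [Group L] [Group A]
    [Group.ResiduallyFinite A] {α β : L →* A} {x : L} (hx : α x ≠ β x) :
    ∃ K : Subgroup L, K.FiniteIndex ∧ α.eqLocus β ≤ K ∧ x ∉ K := by
  obtain ⟨N, hN⟩ := Group.exists_finiteIndexNormalSubgroup_of_residuallyFinite _ _ hx
  let π := QuotientGroup.mk' N.toSubgroup
  have hle : ((π.comp α).prod (π.comp β)).ker ≤ (π.comp α).eqLocus (π.comp β) := fun y hy =>
    (congrArg Prod.fst hy).trans (congrArg Prod.snd hy).symm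
  exact ⟨_, Subgroup.finiteIndex_of_le hle, fun y (hy : α y = β y) => congrArg π hy, hN⟩

namespace Subgroup

variable {A B : Type*} [Group A] [Group B] {H : Subgroup (A × B)}

noncomputable def equivMapSnd (hinj : Set.InjOn Prod.snd (H : Set (A × B))) :
    H ≃* H.map (MonoidHom.snd A B) :=
  (MonoidHom.ofInjective (f := (MonoidHom.snd A B).comp H.subtype)
    fun x y hxy => Subtype.ext (hinj x.2 y.2 hxy)).trans
    (MulEquiv.subgroupCongr (by rw [MonoidHom.range_comp, range_subtype]))

noncomputable def graphHom (hinj : Set.InjOn Prod.snd (H : Set (A × B))) :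
    H.map (MonoidHom.snd A B) →* A :=
  (MonoidHom.fst A B).comp (H.subtype.comp (equivMapSnd hinj).symm.toMonoidHom)

theorem mem_iff_fst_eq_graphHom (hinj : Set.InjOn Prod.snd (H : Set (A × B))) {x : A × B}
    (hx : x.2 ∈ H.map (MonoidHom.snd A B)) : x ∈ H ↔ x.1 = graphHom hinj ⟨x.2, hx⟩ := by
  set y := (equivMapSnd hinj).symm ⟨x.2, hx⟩
  have hy : (y : A × B).2 = x.2 := congrArg Subtype.val ((equivMapSnd hinj).apply_symm_apply _)
  constructor
  · intro hxH
    exact congrArg Prod.fst (hinj hxH y.2 hy.symm)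
  · intro h
    rw [show x = y from Prod.ext h hy.symm]
    exact y.2

end Subgroup

theorem stmt14 {A B : Type*} [Group A] [Group B] (hA : ResiduallyFinite A)
    (H : Subgroup (A × B))
    (hinj : ∀ x ∈ H, ∀ y ∈ H, (x : A × B).2 = (y : A × B).2 → x = y)
    (g : A × B) (hg : g ∈ (⊤ : Subgroup A).prod (H.map (MonoidHom.snd A B)))
    (hgH : g ∉ H) :
    ∃ V : Subgroup (A × B),
      V ≤ (⊤ : Subgroup A).prod (H.map (MonoidHom.snd A B)) ∧
      (V.subgroupOf ((⊤ : Subgroup A).prod (H.map (MonoidHom.snd A B)))).FiniteIndex ∧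
      H ≤ V ∧ g ∉ V := by
  set P := (⊤ : Subgroup A).prod (H.map (MonoidHom.snd A B))
  have : Group.ResiduallyFinite A := Group.residuallyFinite_of_forall_exists_finite_monoidHom hA
  have hinj' : Set.InjOn Prod.snd (H : Set (A × B)) := fun x hx y hy => hinj x hx y hy
  have hsnd (p : P) : (p : A × B).2 ∈ H.map (MonoidHom.snd A B) := (Subgroup.mem_prod.mp p.2).2
  let α : P →* A := (MonoidHom.fst A B).comp P.subtype
  let β : P →* A := (H.graphHom hinj').comp
    (((MonoidHom.snd A B).comp P.subtype).codRestrict _ hsnd)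
  have hH (p : P) : (p : A × B) ∈ H ↔ α p = β p := H.mem_iff_fst_eq_graphHom hinj' (hsnd p)
  obtain ⟨K, hK, hHK, hgK⟩ :=
    α.exists_finiteIndex_eqLocus_le_notMem (x := ⟨g, hg⟩) fun h => hgH ((hH _).mpr h)
  have hHP : H ≤ P := fun h hh =>
    Subgroup.mem_prod.mpr ⟨Subgroup.mem_top _, Subgroup.mem_map_of_mem _ hh⟩
  refine ⟨K.map P.subtype, Subgroup.map_subtype_le K, ?_, fun h hh => ?_, ?_⟩
  · rwa [Subgroup.subgroupOf, Subgroup.comap_map_eq_self_of_injective P.subtype_injective]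
  · exact Subgroup.mem_map_of_mem P.subtype (x := ⟨h, hHP hh⟩) (hHK ((hH _).mp hh))
  · exact (Subgroup.mem_map_iff_mem P.subtype_injective (x := ⟨g, hg⟩)).not.mpr hgK
end

section
/- Let G be a group, H ≤ G, and suppose there is a finite-index normal subgroup V of G with H ≤ V such that H is separable in V. Then H is separable in G. -/
namespace Subgroup

variable {G : Type*} [Group G]

theorem finiteIndex_map_subtype_s15 {V : Subgroup G} [V.FiniteIndex] (K : Subgroup V)
    [K.FiniteIndex] : (K.map V.subtype).FiniteIndex :=
  ⟨by
    rw [index_map_subtype]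
    exact mul_ne_zero K.index_ne_zero_of_finite V.index_ne_zero_of_finite⟩

end Subgroup

theorem SubgroupSeparable.map_subtype {G : Type*} [Group G] {V : Subgroup G} [V.FiniteIndex]
    {H : Subgroup V} (hH : SubgroupSeparable H) : SubgroupSeparable (H.map V.subtype) := by
  intro g hg
  by_cases hgV : g ∈ V
  · have hgH : (⟨g, hgV⟩ : V) ∉ H := fun h => hg ⟨_, h, rfl⟩
    obtain ⟨K, _, hHK, hgK⟩ := hH _ hgH
    refine ⟨K.map V.subtype, Subgroup.finiteIndex_map_subtype_s15 K, Subgroup.map_mono hHK, ?_⟩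
    exact fun hgK' => hgK ((Subgroup.mem_map_iff_mem V.subtype_injective).1 hgK')
  · exact ⟨V, inferInstance, Subgroup.map_subtype_le H, hgV⟩

theorem stmt15_general {G : Type*} [Group G] (V H : Subgroup G)
    (hfi : V.FiniteIndex) (hHV : H ≤ V)
    (hsep : SubgroupSeparable (H.subgroupOf V)) :
    SubgroupSeparable H := by
  rw [← Subgroup.map_subgroupOf_eq_of_le hHV]
  exact hsep.map_subtype

theorem stmt15 {G : Type*} [Group G] (V H : Subgroup G) [V.Normal]
    (hfi : V.FiniteIndex) (hHV : H ≤ V)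
    (hsep : SubgroupSeparable (H.subgroupOf V)) :
    SubgroupSeparable H :=
  stmt15_general V H hfi hHV hsep
end
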